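/- arXiv:1901.06853 — 5 statements merged into one kernel-verified Lean document; each statement's English description precedes it below -/
import Mathlib

section
/- The four Schubert derivations σ_+(z), σ̄_+(z), σ_-(z), σ̄_-(z) on the exterior algebra ⋀M are mutually commuting operators (as formal power series of endomorphisms of ⋀M). -/
open ExteriorAlgebra

noncomputable section

abbrev M : Type := ℤ →₀ ℤ
def b (i : ℤ) : M := Finsupp.single i 1
abbrev A : Type := ExteriorAlgebra ℤ M

/-- Hasse–Schmidt derivation on `⋀M`, coefficientwise. -/
def IsHS (D : ℕ → Module.End ℤ A) : Prop :=
  ∀ (n : ℕ) (u w : A), D n (u * w) = ∑ j ∈ Finset.range (n + 1), D j u * D (n - j) w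

/-- `c` lists the coefficients of the Schubert derivation `σ₊(z)`:
`σ₊(z) bⱼ = ∑_{i≥0} b_{j+i} z^i`. -/
def IsSigmaPlus (c : ℕ → Module.End ℤ A) : Prop :=
  IsHS c ∧ c 0 = 1 ∧ ∀ (n : ℕ) (j : ℤ), c n (ι ℤ (b j)) = ι ℤ (b (j + n))

/-- `c` lists the coefficients (in `z^{-i}`) of `σ₋(z)`: `σ₋(z) bⱼ = ∑_{i≥0} b_{j-i} z^{-i}`. -/
def IsSigmaMinus (c : ℕ → Module.End ℤ A) : Prop :=
  IsHS c ∧ c 0 = 1 ∧ ∀ (n : ℕ) (j : ℤ), c n (ι ℤ (b j)) = ι ℤ (b (j - n))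

/-- `c` lists the coefficients of `σ̄₊(z)`, characterized by `σ̄₊(z) bⱼ = bⱼ − b_{j+1} z`. -/
def IsSigmaBarPlus (c : ℕ → Module.End ℤ A) : Prop :=
  IsHS c ∧ c 0 = 1 ∧ (∀ j : ℤ, c 1 (ι ℤ (b j)) = -(ι ℤ (b (j + 1)))) ∧
    ∀ n : ℕ, 2 ≤ n → ∀ j : ℤ, c n (ι ℤ (b j)) = 0

/-- `c` lists the coefficients (in `z^{-i}`) of `σ̄₋(z)`, characterized by
`σ̄₋(z) bⱼ = bⱼ − b_{j-1} z^{-1}`. -/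
def IsSigmaBarMinus (c : ℕ → Module.End ℤ A) : Prop :=
  IsHS c ∧ c 0 = 1 ∧ (∀ j : ℤ, c 1 (ι ℤ (b j)) = -(ι ℤ (b (j - 1)))) ∧
    ∀ n : ℕ, 2 ≤ n → ∀ j : ℤ, c n (ι ℤ (b j)) = 0

/-! Each of the four derivations acts on the generators `b k` by scaled shifts
`b k ↦ ε • b (k + s)`, and any two scaled shifts commute. Commutation on the generators
propagates to all of `⋀M`: by the Leibniz rule both `c i (d j (u * w))` and
`d j (c i (u * w))` expand into the same double sum. -/

theorem IsHS.map_one {c : ℕ → Module.End ℤ A} (hc : IsHS c) (hc0 : c 0 = 1) (n : ℕ) :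
    c n (1 : A) = if n = 0 then 1 else 0 := by
  induction n using Nat.strong_induction_on with
  | _ n ih =>
    rcases Nat.eq_zero_or_pos n with rfl | hn
    · simp [hc0]
    · have hleib := hc n 1 1
      rw [one_mul, Finset.sum_range_succ, Finset.sum_eq_single_of_mem 0
        (Finset.mem_range.mpr hn) fun k hk hk0 => by
          rw [ih k (Finset.mem_range.mp hk), if_neg hk0, zero_mul]] at hleib
      simpa [hc0, hn.ne'] using hleib

theorem IsHS.map_algebraMap {c : ℕ → Module.End ℤ A} (hc : IsHS c) (hc0 : c 0 = 1) (n : ℕ)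
    (r : ℤ) : c n (algebraMap ℤ A r) = if n = 0 then algebraMap ℤ A r else 0 := by
  rw [Algebra.algebraMap_eq_smul_one, map_smul, hc.map_one hc0]
  split_ifs <;> simp

theorem IsHS.commute_of_commute_ι {c d : ℕ → Module.End ℤ A} (hc : IsHS c) (hc0 : c 0 = 1)
    (hd : IsHS d) (hd0 : d 0 = 1)
    (hι : ∀ (i j : ℕ) (m : M), c i (d j (ι ℤ m)) = d j (c i (ι ℤ m))) (i j : ℕ) :
    Commute (c i) (d j) := by
  refine LinearMap.ext fun x => ?_
  change c i (d j x) = d j (c i x)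
  induction x using ExteriorAlgebra.induction generalizing i j with
  | algebraMap r =>
    rw [hd.map_algebraMap hd0, hc.map_algebraMap hc0]
    split_ifs <;>
      simp only [map_zero, hc.map_algebraMap hc0, hd.map_algebraMap hd0, ↓reduceIte, *]
  | ι m => exact hι i j m
  | add u w hu hw => simp only [map_add, hu, hw]
  | mul u w hu hw =>
    calc c i (d j (u * w))
        = ∑ q ∈ Finset.range (j + 1), ∑ p ∈ Finset.range (i + 1),
            c p (d q u) * c (i - p) (d (j - q) w) := by
          simp only [hd j, map_sum, hc i]
      _ = ∑ p ∈ Finset.range (i + 1), ∑ q ∈ Finset.range (j + 1),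
            d q (c p u) * d (j - q) (c (i - p) w) := by
          rw [Finset.sum_comm]
          simp only [hu, hw]
      _ = d j (c i (u * w)) := by
          simp only [hc i, map_sum, hd j]

/-- Every coefficient acts on the basis of `M` by a monomial matrix `b k ↦ ε n • b (k + s n)`. -/
def IsMonomialHS (c : ℕ → Module.End ℤ A) : Prop :=
  IsHS c ∧ c 0 = 1 ∧
    ∃ ε s : ℕ → ℤ, ∀ (n : ℕ) (k : ℤ), c n (ι ℤ (b k)) = ε n • ι ℤ (b (k + s n))

theorem IsMonomialHS.commute {c d : ℕ → Module.End ℤ A} (hc : IsMonomialHS c)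
    (hd : IsMonomialHS d) (i j : ℕ) : Commute (c i) (d j) := by
  obtain ⟨hcHS, hc0, εc, sc, hcb⟩ := hc
  obtain ⟨hdHS, hd0, εd, sd, hdb⟩ := hd
  refine hcHS.commute_of_commute_ι hc0 hdHS hd0 (fun i j m => ?_) i j
  suffices (c i ∘ₗ d j) ∘ₗ ι ℤ = (d j ∘ₗ c i) ∘ₗ ι ℤ from LinearMap.congr_fun this m
  refine Finsupp.lhom_ext' fun k => LinearMap.ext_ring ?_
  change c i (d j (ι ℤ (b k))) = d j (c i (ι ℤ (b k)))
  simp only [hcb, hdb, map_smul, smul_smul, mul_comm (εc i), add_right_comm k]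

theorem IsMonomialHS.of_shift_series {c : ℕ → Module.End ℤ A} (hc : IsHS c)
    (hc0 : c 0 = 1) (s : ℤ) (h : ∀ (n : ℕ) (k : ℤ), c n (ι ℤ (b k)) = ι ℤ (b (k + n * s))) :
    IsMonomialHS c :=
  ⟨hc, hc0, fun _ => 1, fun n => n * s, by simpa using h⟩

theorem IsMonomialHS.of_one_sub_shift {c : ℕ → Module.End ℤ A} (hc : IsHS c)
    (hc0 : c 0 = 1) (s : ℤ) (h1 : ∀ k : ℤ, c 1 (ι ℤ (b k)) = -(ι ℤ (b (k + s))))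
    (h2 : ∀ n : ℕ, 2 ≤ n → ∀ k : ℤ, c n (ι ℤ (b k)) = 0) : IsMonomialHS c := by
  refine ⟨hc, hc0, fun n => if n = 0 then 1 else if n = 1 then -1 else 0, fun n => n * s,
    fun n k => ?_⟩
  match n with
  | 0 => simp [hc0]
  | 1 => simp [h1]
  | n + 2 => simp [h2 (n + 2) (by omega)]

theorem IsSigmaPlus.isMonomialHS {c : ℕ → Module.End ℤ A} (h : IsSigmaPlus c) :
    IsMonomialHS c :=
  IsMonomialHS.of_shift_series h.1 h.2.1 1 (by simpa using h.2.2)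

theorem IsSigmaMinus.isMonomialHS {c : ℕ → Module.End ℤ A} (h : IsSigmaMinus c) :
    IsMonomialHS c :=
  IsMonomialHS.of_shift_series h.1 h.2.1 (-1) (by simpa [sub_eq_add_neg] using h.2.2)

theorem IsSigmaBarPlus.isMonomialHS {c : ℕ → Module.End ℤ A} (h : IsSigmaBarPlus c) :
    IsMonomialHS c :=
  IsMonomialHS.of_one_sub_shift h.1 h.2.1 1 h.2.2.1 h.2.2.2

theorem IsSigmaBarMinus.isMonomialHS {c : ℕ → Module.End ℤ A} (h : IsSigmaBarMinus c) :
    IsMonomialHS c :=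
  IsMonomialHS.of_one_sub_shift h.1 h.2.1 (-1) (by simpa [sub_eq_add_neg] using h.2.2.1)
    h.2.2.2

/-- The four Schubert derivations `σ₊(z), σ̄₊(z), σ₋(z), σ̄₋(z)` on `⋀M` are mutually
commuting, i.e. all their coefficients commute pairwise in `End(⋀M)`. -/
theorem stmt6 (sp sbp sm sbm : ℕ → Module.End ℤ A)
    (hsp : IsSigmaPlus sp) (hsbp : IsSigmaBarPlus sbp)
    (hsm : IsSigmaMinus sm) (hsbm : IsSigmaBarMinus sbm) :
    ∀ c d : ℕ → Module.End ℤ A,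
      (c = sp ∨ c = sbp ∨ c = sm ∨ c = sbm) →
      (d = sp ∨ d = sbp ∨ d = sm ∨ d = sbm) →
      ∀ i j : ℕ, Commute (c i) (d j) := by
  have hmonomial : ∀ c, (c = sp ∨ c = sbp ∨ c = sm ∨ c = sbm) → IsMonomialHS c := by
    rintro c (rfl | rfl | rfl | rfl)
    exacts [hsp.isMonomialHS, hsbp.isMonomialHS, hsm.isMonomialHS, hsbm.isMonomialHS]
  intro c d hc hd
  exact (hmonomial c hc).commute (hmonomial d hd)
end
end

section
/- For the Schubert derivation coefficients σ̄_i (coefficients of the inverse Schubert derivation σ̄_+(z) = Σ_{j≥0}(−1)^j σ̄_j z^j), one has σ̄_i u = 0 for every u ∈ ⋀^s M with s ≤ i − 1, for all i ≥ 1. -/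
open ExteriorAlgebra

noncomputable section

/-!
In Leibniz's rule `D i (v * w) = ∑ⱼ D j v * D (i - j) w` with `v ∈ V` and `w ∈ V ^ s`, only
`D i w` and `D 1 v * D (i - 1) w` survive, since `D j` kills `V` for `j ≥ 2`. So `D i` kills
`V ^ (s + 1)` as soon as `D i` and `D (i - 1)` kill `V ^ s`, and induction on `s`, starting from
the scalars `V ^ 0`, which every `D i` with `i ≥ 1` kills, gives `D i (V ^ s) = 0` for `s < i`.
-/

section HasseSchmidt

variable {R B : Type*} [CommSemiring R] [Ring B] [Algebra R B] {D : ℕ → Module.End R B}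

theorem hasseSchmidt_apply_one_eq_zero
    (hD : ∀ (n : ℕ) (u w : B),
      D n (u * w) = ∑ j ∈ Finset.range (n + 1), D j u * D (n - j) w)
    (h0 : D 0 = 1) : ∀ n : ℕ, 1 ≤ n → D n 1 = 0 := by
  intro n
  induction n using Nat.strong_induction_on with
  | _ n ih =>
    intro hn
    obtain ⟨m, rfl⟩ : ∃ m, n = m + 1 := ⟨n - 1, by omega⟩
    have hmiddle : ∀ j ∈ Finset.range m, D (j + 1) 1 * D (m + 1 - (j + 1)) 1 = 0 := by
      intro j hj
      rw [ih (j + 1) (by simpa using hj) (by omega), zero_mul]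
    have hleibniz := hD (m + 1) 1 1
    rw [one_mul, Finset.sum_range_succ, Finset.sum_range_succ', Finset.sum_eq_zero hmiddle]
      at hleibniz
    simp only [h0, Module.End.one_apply, Nat.sub_zero, Nat.sub_self, one_mul, mul_one,
      zero_add] at hleibniz
    exact left_eq_add.mp hleibniz

theorem hasseSchmidt_apply_pow_eq_zero_of_lt
    (hD : ∀ (n : ℕ) (u w : B),
      D n (u * w) = ∑ j ∈ Finset.range (n + 1), D j u * D (n - j) w)
    (hone : ∀ n : ℕ, 1 ≤ n → D n 1 = 0) {V : Submodule R B}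
    (hV : ∀ n : ℕ, 2 ≤ n → ∀ v ∈ V, D n v = 0) :
    ∀ s i : ℕ, s < i → ∀ u ∈ V ^ s, D i u = 0 := by
  intro s
  induction s with
  | zero =>
    intro i hi u hu
    obtain ⟨r, rfl⟩ := Submodule.mem_one.mp (pow_zero V ▸ hu)
    rw [Algebra.algebraMap_eq_smul_one, map_smul, hone i hi, smul_zero]
  | succ s ih =>
    intro i hi u hu
    rw [pow_succ'] at hu
    refine Submodule.mul_induction_on hu (fun v hv w hw => ?_) (fun x y hx hy => ?_)
    · rw [hD i v w]
      refine Finset.sum_eq_zero fun j _ => ?_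
      rcases j with _ | _ | j
      · rw [Nat.sub_zero, ih i (by omega) w hw, mul_zero]
      · rw [ih (i - 1) (by omega) w hw, mul_zero]
      · rw [hV (j + 2) (by omega) v hv, zero_mul]
    · rw [map_add, hx, hy, add_zero]

end HasseSchmidt

theorem IsSigmaBarPlus.apply_ι_eq_zero {c : ℕ → Module.End ℤ A} (hc : IsSigmaBarPlus c)
    {n : ℕ} (hn : 2 ≤ n) : ∀ v ∈ LinearMap.range (ι ℤ : M →ₗ[ℤ] A), c n v = 0 := by
  have hcomp : c n ∘ₗ ι ℤ = 0 :=
    Finsupp.basisSingleOne.ext fun j => by simpa [b] using hc.2.2.2 n hn j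
  rintro _ ⟨m, rfl⟩
  exact LinearMap.congr_fun hcomp m

/-- For the inverse Schubert derivation `σ̄₊(z) = ∑_{j≥0} (−1)^j σ̄ⱼ z^j` (whose actual
coefficients are `c j = (−1)^j σ̄ⱼ`), one has `σ̄ᵢ u = 0` for every `u ∈ ⋀^s M` with
`s ≤ i − 1`, `i ≥ 1`.  (Note `σ̄ᵢ u = 0 ↔ c i u = 0`.) -/
theorem stmt7 (c : ℕ → Module.End ℤ A) (hc : IsSigmaBarPlus c) :
    ∀ i : ℕ, 1 ≤ i → ∀ s : ℕ, s ≤ i - 1 →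
      ∀ u ∈ (LinearMap.range (ι ℤ : M →ₗ[ℤ] A)) ^ s, c i u = 0 := by
  intro i hi s hs
  exact hasseSchmidt_apply_pow_eq_zero_of_lt hc.1 (hasseSchmidt_apply_one_eq_zero hc.1 hc.2.1)
    (fun n hn => hc.apply_ι_eq_zero hn) s i (by omega)
end
end

section
/- Let σ̄_+(z_1),…,σ̄_+(z_r) be the inverse Schubert derivations extended to the fermionic Fock space. Then for all m ∈ ℤ and r ≥ 0: b_m ∧ b_{m−1} ∧ ⋯ ∧ b_{m−r+1} ∧ (σ̄_+(z_1)⋯σ̄_+(z_r)[b]_{m−r}) = [b]_m. -/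
/-! Induction on `r`. Write `u = b_{m-1} ∧ ⋯ ∧ b_{m-r}`. In positive degree `σ̄₊` only shifts
a single index up by one, so by the Leibniz rule `b_m ∧ σ̄₊_j u = 0` for `j ≥ 1`. Hence, after
wedging with `b_m`, only the `σ̄₊_0 u = u` term of the expansion of `σ̄₊_n (u ∧ f)` survives:
`b_m ∧ u ∧ σ̄₊_n f = b_m ∧ σ̄₊_n (u ∧ f)`. This peels off one factor and leaves
`b_m ∧ σ̄₊_n [b]_{m-1}`, which is `[b]_m` for `n = 0` and contains `b_m ∧ b_m = 0` otherwise. -/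

open ExteriorAlgebra

noncomputable section

/-- `[M]`, the free ℤ-module on the symbols `[b]_m`, `m ∈ ℤ`. -/
abbrev V : Type := ℤ →₀ ℤ
def v (m : ℤ) : V := Finsupp.single m 1

/-- The `⋀M`-submodule of relations: generated by `b_m ⊗ [b]_{m−1} − 1 ⊗ [b]_m`
and `b_m ⊗ [b]_m`. -/
def W : Submodule A (TensorProduct ℤ A V) :=
  Submodule.span A {x | ∃ m : ℤ,
    x = (ι ℤ (b m)) ⊗ₜ[ℤ] v (m - 1) - (1 : A) ⊗ₜ[ℤ] v m ∨ x = (ι ℤ (b m)) ⊗ₜ[ℤ] v m}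

/-- The fermionic Fock space `F = (⋀M ⊗ [M]) / W`; the class of `u ⊗ [b]_m`
is the wedge `u ∧ [b]_m`, realized as the scalar action `u • -` of `⋀M`. -/
abbrev F : Type := TensorProduct ℤ A V ⧸ W

/-- `[b]_m ∈ F`. -/
def bb (m : ℤ) : F := Submodule.Quotient.mk ((1 : A) ⊗ₜ[ℤ] v m)

/-- `b^r_{m+λ} = b_{m+λ₁} ∧ b_{m−1+λ₂} ∧ ⋯ ∧ b_{m−r+1+λ_r} ∈ ⋀^r M` (0-indexed `λ`). -/
def wb (m : ℤ) (r : ℕ) (lam : Fin r → ℕ) : A :=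
  (List.ofFn fun k : Fin r => ι ℤ (b (m - ((k : ℕ) : ℤ) + ((lam k : ℕ) : ℤ)))).prod

/-- `[b]_{m+λ} = b^r_{m+λ} ∧ [b]_{m−r} ∈ F`. -/
def bbp (m : ℤ) (r : ℕ) (lam : Fin r → ℕ) : F := wb m r lam • bb (m - r)

/-- The charge-`n` Fock space `F_n = ⊕_{λ∈𝒫} ℤ·[b]_{n+λ}`. -/
def Fm (n : ℤ) : Submodule ℤ F :=
  Submodule.span ℤ {x | ∃ (r : ℕ) (lam : Fin r → ℕ), Antitone lam ∧ x = bbp n r lam}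

/-- `cF` extends `cA` multiplicatively from `⋀M` to the Fock space `F`:
`D(z)(u ∧ f) = D(z)u ∧ D(z)f`, coefficientwise. -/
def MultOver (cA : ℕ → Module.End ℤ A) (cF : ℕ → Module.End ℤ F) : Prop :=
  ∀ (n : ℕ) (u : A) (f : F), cF n (u • f) = ∑ j ∈ Finset.range (n + 1), cA j u • cF (n - j) f

lemma wb_zero (m : ℤ) (lam : Fin 0 → ℕ) : wb m 0 lam = 1 := by
  simp [wb]

lemma wb_succ (m : ℤ) (r : ℕ) (lam : Fin (r + 1) → ℕ) :
    wb m (r + 1) lam = ι ℤ (b (m + lam 0)) * wb (m - 1) r (fun k => lam k.succ) := by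
  rw [wb, wb, List.ofFn_succ, List.prod_cons]
  congr 1
  · simp
  · congr 2 with k
    push_cast [Fin.val_succ]
    ring_nf

lemma wb_succ_const (m : ℤ) (r c : ℕ) :
    wb m (r + 1) (fun _ => c) = ι ℤ (b (m + c)) * wb (m - 1) r (fun _ => c) :=
  wb_succ m r _

lemma ι_smul_bb_sub_one (m : ℤ) : (ι ℤ (b m) : A) • bb (m - 1) = bb m := by
  rw [bb, bb, ← Submodule.Quotient.mk_smul, Submodule.Quotient.eq]
  refine Submodule.subset_span ⟨m, Or.inl ?_⟩
  rw [TensorProduct.smul_tmul', smul_eq_mul, mul_one]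

lemma IsHS.apply_one_eq_zero {D : ℕ → Module.End ℤ A} (hD : IsHS D) (h0 : D 0 = 1) :
    ∀ n : ℕ, 0 < n → D n 1 = 0 := by
  intro n
  induction n using Nat.strong_induction_on with
  | _ n ih =>
    intro hn
    obtain ⟨k, rfl⟩ : ∃ k, n = k + 1 := ⟨n - 1, by omega⟩
    have hLeibniz := hD (k + 1) 1 1
    rw [one_mul, Finset.sum_range_succ, Finset.sum_range_succ'] at hLeibniz
    have hmiddle : ∀ i ∈ Finset.range k, D (i + 1) 1 * D (k + 1 - (i + 1)) 1 = 0 := by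
      intro i hi
      rw [ih (i + 1) (by simp at hi; omega) (by omega), zero_mul]
    simp only [Finset.sum_congr rfl hmiddle, Finset.sum_const_zero, zero_add, h0,
      Module.End.one_apply, Nat.sub_self, Nat.sub_zero, one_mul, mul_one] at hLeibniz
    exact right_eq_add.mp hLeibniz

lemma IsSigmaBarPlus.apply_ι_mul {sbA : ℕ → Module.End ℤ A} (hsbA : IsSigmaBarPlus sbA)
    (j : ℕ) (m : ℤ) (w : A) :
    sbA (j + 1) (ι ℤ (b m) * w) = ι ℤ (b m) * sbA (j + 1) w - ι ℤ (b (m + 1)) * sbA j w := by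
  obtain ⟨hHS, h0, h1, hvanish⟩ := hsbA
  rw [hHS, Finset.sum_range_succ', Finset.sum_range_succ']
  have hhigh : ∀ i ∈ Finset.range j,
      sbA (i + 1 + 1) (ι ℤ (b m)) * sbA (j + 1 - (i + 1 + 1)) w = 0 :=
    fun i _ => by rw [hvanish _ (by omega), zero_mul]
  rw [Finset.sum_congr rfl hhigh, Finset.sum_const_zero, h0, h1]
  simp only [Module.End.one_apply, Nat.sub_zero, Nat.add_sub_cancel]
  noncomm_ring

lemma IsSigmaBarPlus.ι_mul_apply_wb_eq_zero {sbA : ℕ → Module.End ℤ A}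
    (hsbA : IsSigmaBarPlus sbA) (r : ℕ) :
    ∀ (m : ℤ) (j : ℕ), ι ℤ (b m) * sbA (j + 1) (wb (m - 1) r (fun _ => 0)) = 0 := by
  induction r with
  | zero =>
    intro m j
    rw [wb_zero, hsbA.1.apply_one_eq_zero hsbA.2.1 _ j.succ_pos, mul_zero]
  | succ r ih =>
    intro m j
    rw [wb_succ_const, Nat.cast_zero, add_zero, hsbA.apply_ι_mul, sub_add_cancel, mul_sub,
      ← mul_assoc, ← mul_assoc, ι_sq_zero, zero_mul, sub_zero, mul_assoc, ih, mul_zero]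

lemma ι_smul_wb_smul_cF {sbA : ℕ → Module.End ℤ A} (hsbA : IsSigmaBarPlus sbA)
    {cF : ℕ → Module.End ℤ F} (hmult : MultOver sbA cF) (m : ℤ) (r n : ℕ) (f : F) :
    ι ℤ (b m) • (wb (m - 1) r (fun _ => 0) • cF n f) =
      ι ℤ (b m) • cF n (wb (m - 1) r (fun _ => 0) • f) := by
  rw [hmult, Finset.sum_range_succ', smul_add, Finset.smul_sum, hsbA.2.1, Module.End.one_apply,
    Nat.sub_zero]
  have hcorrection : ∀ i ∈ Finset.range n,
      ι ℤ (b m) • (sbA (i + 1) (wb (m - 1) r (fun _ => 0)) • cF (n - (i + 1)) f) = 0 :=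
    fun i _ => by rw [smul_smul, hsbA.ι_mul_apply_wb_eq_zero, zero_smul]
  rw [Finset.sum_congr rfl hcorrection, Finset.sum_const_zero, zero_add]

lemma ι_smul_cF_bb {cF : ℕ → Module.End ℤ F}
    (hbb : ∀ (n : ℕ) (k : ℤ), cF n (bb k) = ((-1 : ℤ) ^ n) • bbp k n fun _ => 1) (m : ℤ) (n : ℕ) :
    ι ℤ (b m) • cF n (bb (m - 1)) = if n = 0 then bb m else 0 := by
  rw [hbb, bbp]
  cases n with
  | zero => rw [if_pos rfl, pow_zero, one_smul, wb_zero, one_smul, Nat.cast_zero, sub_zero,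
      ι_smul_bb_sub_one]
  | succ n =>
    rw [if_neg n.succ_ne_zero, wb_succ_const, Nat.cast_one, sub_add_cancel,
      smul_comm (ι ℤ (b m) : A), smul_smul, ← mul_assoc, ι_sq_zero, zero_mul, zero_smul, smul_zero]

/-- `b_m ∧ ⋯ ∧ b_{m−r+1} ∧ (σ̄₊(z₁)⋯σ̄₊(z_r)[b]_{m−r}) = [b]_m`, stated as the identity
of the coefficient of `z₁^{a₁}⋯z_r^{a_r}` for every multi-exponent `a`.  Here `cF`
lists the coefficients of `σ̄₊(z)` extended to `F`, so that
`σ̄₊(z)[b]_k = ∑_{j≥0} (−1)^j [b]_{k+(1^j)} z^j`. -/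
theorem stmt10 (sbA : ℕ → Module.End ℤ A) (hsbA : IsSigmaBarPlus sbA)
    (cF : ℕ → Module.End ℤ F) (hmult : MultOver sbA cF)
    (hbb : ∀ (n : ℕ) (k : ℤ), cF n (bb k) = ((-1 : ℤ) ^ n) • bbp k n fun _ => 1) :
    ∀ (m : ℤ) (r : ℕ) (a : Fin r → ℕ),
      wb m r (fun _ => 0) • ((List.ofFn fun k : Fin r => cF (a k)).prod (bb (m - r))) =
        if ∀ k, a k = 0 then bb m else 0 := by
  intro m r
  induction r generalizing m with
  | zero => intro a; simp [wb_zero]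
  | succ r ih =>
    intro a
    have hcharge : m - ((r + 1 : ℕ) : ℤ) = m - 1 - (r : ℕ) := by push_cast; ring
    rw [wb_succ_const, Nat.cast_zero, add_zero, hcharge, List.ofFn_succ, List.prod_cons,
      Module.End.mul_apply, mul_smul, ι_smul_wb_smul_cF hsbA hmult, ih]
    by_cases hrest : ∀ k : Fin r, a k.succ = 0
    · rw [if_pos hrest, ι_smul_cF_bb hbb]
      simp only [Fin.forall_fin_succ, hrest, implies_true, and_true]
    · rw [if_neg hrest, map_zero, smul_zero]
      simp only [Fin.forall_fin_succ, hrest, and_false, if_false]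
end
end

section
/- The extended Schubert derivations σ_+(z) and σ̄_+(z) on each charge-m Fock space F_m are mutually inverse: σ̄_+(z)σ_+(z) = id on F_m (as elements of End(F_m)[[z]]); similarly σ̄_-(z)σ_-(z) = id on F_m. -/
open ExteriorAlgebra

noncomputable section

/-!
A Cauchy product of multiplicative series is multiplicative, so `E(z) = σ̄(z)σ(z)` is again a
Hasse–Schmidt derivation of `⋀M` whose extension to `F` is multiplicative over it. On `⋀M` it is
the identity, because it is so on `1` and on the generators `b_i`, where only the coefficients of
`σ̄(z)` of degree `0` and `1` survive and they cancel. Hence every coefficient of `E(z)` on `F` is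
`⋀M`-linear, and `F` is generated over `⋀M` by the vacua `[b]_k`. On `[b]_k` the `+` sum telescopes
to `b_k ∧ σ̄₊(z)[b]_{k-1}`, whose coefficients of positive degree contain `b_k` twice.
-/

open Finset

section SeriesMul

variable {R S N : Type*} [Semiring R] [AddCommMonoid N] [Module R N]

/-- The coefficients of the product `D(z) C(z)` in `End(N)[[z]]`. -/
def seriesMul (d c : ℕ → Module.End R N) (n : ℕ) : Module.End R N :=
  ∑ j ∈ range (n + 1), d j * c (n - j)

theorem seriesMul_apply (d c : ℕ → Module.End R N) (n : ℕ) (f : N) :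
    seriesMul d c n f = ∑ j ∈ range (n + 1), d j (c (n - j) f) := by
  simp only [seriesMul, LinearMap.sum_apply, Module.End.mul_apply]

theorem seriesMul_zero (d c : ℕ → Module.End R N) : seriesMul d c 0 = d 0 * c 0 := by
  simp [seriesMul]

theorem sum_range_sum_range_sum_range_comm {P : Type*} [AddCommMonoid P] (n : ℕ)
    (g : ℕ → ℕ → ℕ → ℕ → P) :
    ∑ j ∈ range (n + 1), ∑ i ∈ range (n - j + 1), ∑ l ∈ range (j + 1), g l i (j - l) (n - j - i)
      = ∑ a ∈ range (n + 1), ∑ l ∈ range (a + 1), ∑ p ∈ range (n - a + 1),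
          g l (a - l) p (n - a - p) := by
  simp only [sum_sigma']
  refine sum_nbij' (fun x => ⟨x.2.2 + x.2.1, x.2.2, x.1 - x.2.2⟩)
    (fun y => ⟨y.2.1 + y.2.2, y.1 - y.2.1, y.2.1⟩) ?_ ?_ ?_ ?_ ?_ <;>
  rintro ⟨x, y, z⟩ h <;>
  simp only [mem_sigma, mem_range, Sigma.mk.inj_iff, heq_eq_eq] at h ⊢
  · omega
  · omega
  · exact ⟨by omega, by omega, trivial⟩
  · exact ⟨by omega, trivial, by omega⟩
  · rw [show z + y - z = y by omega, show n - (z + y) - (x - z) = n - x - y by omega]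

variable [Semiring S] [Module R S] [Module S N]

def IsMultiplicativeOver (cS : ℕ → Module.End R S) (cN : ℕ → Module.End R N) : Prop :=
  ∀ (n : ℕ) (u : S) (f : N), cN n (u • f) = ∑ j ∈ range (n + 1), cS j u • cN (n - j) f

theorem IsMultiplicativeOver.mul {cS dS : ℕ → Module.End R S} {cN dN : ℕ → Module.End R N}
    (hc : IsMultiplicativeOver cS cN) (hd : IsMultiplicativeOver dS dN) :
    IsMultiplicativeOver (seriesMul dS cS) (seriesMul dN cN) := by
  intro n u f
  calc seriesMul dN cN n (u • f)
      = ∑ j ∈ range (n + 1), ∑ i ∈ range (n - j + 1), ∑ l ∈ range (j + 1),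
          dS l (cS i u) • dN (j - l) (cN (n - j - i) f) := by
        simp only [seriesMul_apply, hc _ u, map_sum, hd _ _ (cN _ f)]
    _ = ∑ a ∈ range (n + 1), ∑ l ∈ range (a + 1), ∑ p ∈ range (n - a + 1),
          dS l (cS (a - l) u) • dN p (cN (n - a - p) f) :=
        sum_range_sum_range_sum_range_comm n fun l i p q => dS l (cS i u) • dN p (cN q f)
    _ = ∑ a ∈ range (n + 1), seriesMul dS cS a u • seriesMul dN cN (n - a) f := by
        simp only [seriesMul_apply, sum_smul]
        simp only [smul_sum]

theorem IsMultiplicativeOver.map_smul_of_eq_ite {E : ℕ → Module.End R S}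
    {EN : ℕ → Module.End R N} (h : IsMultiplicativeOver E EN)
    (hE : ∀ n u, E n u = if n = 0 then u else 0) (n : ℕ) (u : S) (f : N) :
    EN n (u • f) = u • EN n f := by
  rw [h, sum_range_succ']
  simp [hE]

end SeriesMul

theorem IsHS.mul {c d : ℕ → Module.End ℤ A} (hc : IsHS c) (hd : IsHS d) :
    IsHS (seriesMul d c) :=
  IsMultiplicativeOver.mul hc hd

theorem MultOver.mul {cA dA : ℕ → Module.End ℤ A} {cF dF : ℕ → Module.End ℤ F}
    (hc : MultOver cA cF) (hd : MultOver dA dF) : MultOver (seriesMul dA cA) (seriesMul dF cF) :=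
  IsMultiplicativeOver.mul hc hd

theorem IsHS.apply_one_eq_zero_s12 {c : ℕ → Module.End ℤ A} (hc : IsHS c) (h0 : c 0 = 1) {n : ℕ}
    (hn : n ≠ 0) : c n 1 = 0 := by
  induction n using Nat.strong_induction_on with
  | _ n ih =>
    obtain ⟨m, rfl⟩ := Nat.exists_eq_succ_of_ne_zero hn
    have h := hc (m + 1) 1 1
    rw [mul_one, sum_range_succ, sum_range_succ',
      sum_eq_zero fun j hj => by
        rw [ih (j + 1) (Nat.succ_lt_succ (mem_range.1 hj)) j.succ_ne_zero, zero_mul]] at h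
    simp only [h0, Nat.sub_self, Nat.sub_zero, Module.End.one_apply, one_mul, mul_one,
      zero_add] at h
    simpa using h

theorem IsHS.eq_zero_of_apply_ι_eq_zero {E : ℕ → Module.End ℤ A} (hE : IsHS E) (h0 : E 0 = 1)
    (hι : ∀ n, n ≠ 0 → ∀ i, E n (ι ℤ (b i)) = 0) {n : ℕ} (hn : n ≠ 0) : E n = 0 := by
  suffices h : ∀ u : A, ∀ n, n ≠ 0 → E n u = 0 from LinearMap.ext fun u => h u n hn
  intro u
  induction u using ExteriorAlgebra.induction with
  | algebraMap r =>
    intro n hn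
    rw [Algebra.algebraMap_eq_smul_one, map_smul, hE.apply_one_eq_zero_s12 h0 hn, smul_zero]
  | ι x =>
    intro n hn
    induction x using Finsupp.induction_linear with
    | zero => simp
    | add x y hx hy => rw [map_add, map_add, hx, hy, add_zero]
    | single i a =>
      rw [show Finsupp.single i a = a • b i by simp [b], map_smul, map_smul, hι n hn, smul_zero]
  | mul u w hu hw =>
    intro n hn
    rw [hE, sum_range_succ']
    simp [hu _ (Nat.succ_ne_zero _), hw n hn]
  | add u w hu hw =>
    intro n hn
    rw [map_add, hu n hn, hw n hn, add_zero]

theorem seriesMul_apply_ι_eq_zero {c d : ℕ → Module.End ℤ A} (x : M) (y : ℕ → M)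
    (hc : ∀ k, c k (ι ℤ x) = ι ℤ (y k)) (hd0 : d 0 = 1)
    (hd1 : ∀ k, d 1 (ι ℤ (y k)) = -ι ℤ (y (k + 1)))
    (hd2 : ∀ j, 2 ≤ j → ∀ k, d j (ι ℤ (y k)) = 0) {n : ℕ} (hn : n ≠ 0) :
    seriesMul d c n (ι ℤ x) = 0 := by
  obtain ⟨m, rfl⟩ := Nat.exists_eq_succ_of_ne_zero hn
  rw [seriesMul_apply, sum_range_succ', sum_range_succ',
    sum_eq_zero fun j _ => by rw [hc, hd2 _ (by omega)]]
  simp [hc, hd0, hd1]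

theorem IsHS.seriesMul_apply_eq_ite {c d : ℕ → Module.End ℤ A} (hc : IsHS c) (hd : IsHS d)
    (hc0 : c 0 = 1) (hd0 : d 0 = 1) (hι : ∀ n, n ≠ 0 → ∀ i, seriesMul d c n (ι ℤ (b i)) = 0)
    (n : ℕ) (u : A) : seriesMul d c n u = if n = 0 then u else 0 := by
  have h0 : seriesMul d c 0 = 1 := by simp [seriesMul_zero, hc0, hd0]
  split_ifs with hn
  · rw [hn, h0, Module.End.one_apply]
  · rw [(hc.mul hd).eq_zero_of_apply_ι_eq_zero h0 hι hn, LinearMap.zero_apply]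

theorem seriesMul_sigmaBarPlus_sigmaPlus_ι {sA sbA : ℕ → Module.End ℤ A} (hsA : IsSigmaPlus sA)
    (hsbA : IsSigmaBarPlus sbA) (n : ℕ) (hn : n ≠ 0) (i : ℤ) :
    seriesMul sbA sA n (ι ℤ (b i)) = 0 :=
  seriesMul_apply_ι_eq_zero (b i) (fun k => b (i + k)) (hsA.2.2 · i) hsbA.2.1
    (fun k => by rw [hsbA.2.2.1]; push_cast; ring_nf) (fun j hj _ => hsbA.2.2.2 j hj _) hn

theorem seriesMul_sigmaBarMinus_sigmaMinus_ι {smA sbmA : ℕ → Module.End ℤ A}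
    (hsmA : IsSigmaMinus smA) (hsbmA : IsSigmaBarMinus sbmA) (n : ℕ) (hn : n ≠ 0) (i : ℤ) :
    seriesMul sbmA smA n (ι ℤ (b i)) = 0 :=
  seriesMul_apply_ι_eq_zero (b i) (fun k => b (i - k)) (hsmA.2.2 · i) hsbmA.2.1
    (fun k => by rw [hsbmA.2.2.1]; push_cast; ring_nf) (fun j hj _ => hsbmA.2.2.2 j hj _) hn

theorem ι_b_smul_bb_sub_one (k : ℤ) : ι ℤ (b k) • bb (k - 1) = bb k := by
  have h : ι ℤ (b k) ⊗ₜ[ℤ] v (k - 1) - (1 : A) ⊗ₜ[ℤ] v k ∈ W :=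
    Submodule.subset_span ⟨k, Or.inl rfl⟩
  rw [bb, bb, ← Submodule.Quotient.mk_smul, Submodule.Quotient.eq]
  simpa [TensorProduct.smul_tmul'] using h

theorem ι_b_smul_bbp_sub_one_succ (k : ℤ) (r : ℕ) :
    ι ℤ (b k) • bbp (k - 1) (r + 1) (fun _ => 1) = 0 := by
  rw [bbp, wb, List.ofFn_succ, List.prod_cons, smul_smul, ← mul_assoc]
  simp

theorem span_range_bb : Submodule.span A (Set.range bb) = ⊤ := by
  refine Submodule.eq_top_iff'.2 fun f => ?_
  obtain ⟨t, rfl⟩ := Submodule.Quotient.mk_surjective W f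
  induction t using TensorProduct.induction_on with
  | zero => exact zero_mem _
  | tmul a x =>
    induction x using Finsupp.induction_linear with
    | zero => simp
    | add x y hx hy => rw [TensorProduct.tmul_add, Submodule.Quotient.mk_add]; exact add_mem hx hy
    | single k c =>
      have h : a ⊗ₜ[ℤ] Finsupp.single k c = (c • a) • ((1 : A) ⊗ₜ[ℤ] v k) := by
        rw [TensorProduct.smul_tmul', smul_eq_mul, mul_one, TensorProduct.smul_tmul, v,
          Finsupp.smul_single, smul_eq_mul, mul_one]
      rw [h, Submodule.Quotient.mk_smul]
      exact Submodule.smul_mem _ _ (Submodule.subset_span ⟨k, rfl⟩)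
  | add x y hx hy => rw [Submodule.Quotient.mk_add]; exact add_mem hx hy

theorem eq_ite_of_map_smul {E : ℕ → Module.End ℤ F} (hE : ∀ n (u : A) f, E n (u • f) = u • E n f)
    (hbb : ∀ n k, E n (bb k) = if n = 0 then bb k else 0) (n : ℕ) (f : F) :
    E n f = if n = 0 then f else 0 := by
  have hf : f ∈ Submodule.span A (Set.range bb) := span_range_bb ▸ Submodule.mem_top
  induction hf using Submodule.span_induction with
  | mem _ h => obtain ⟨k, rfl⟩ := h; exact hbb n k
  | zero => simp
  | add f g _ _ hf hg => rw [map_add, hf, hg]; split_ifs <;> simp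
  | smul u f _ hf => rw [hE, hf]; split_ifs <;> simp

theorem MultOver.apply_zero_smul {dA : ℕ → Module.End ℤ A} {dF : ℕ → Module.End ℤ F}
    (h : MultOver dA dF) (hd0 : dA 0 = 1) (u : A) (f : F) : dF 0 (u • f) = u • dF 0 f := by
  simp [h 0, hd0]

theorem MultOver.apply_succ_ι_smul {dA : ℕ → Module.End ℤ A} {dF : ℕ → Module.End ℤ F}
    (h : MultOver dA dF) (hd0 : dA 0 = 1) {x y : M} (hd1 : dA 1 (ι ℤ x) = -ι ℤ y)
    (hd2 : ∀ j, 2 ≤ j → dA j (ι ℤ x) = 0) (j : ℕ) (f : F) :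
    dF (j + 1) (ι ℤ x • f) = ι ℤ x • dF (j + 1) f - ι ℤ y • dF j f := by
  rw [h, sum_range_succ', sum_range_succ', sum_eq_zero fun i _ => by rw [hd2 _ (by omega), zero_smul]]
  simp [hd0, hd1, sub_eq_add_neg, add_comm]

theorem seriesMul_sigmaBarPlus_sigmaPlus_bb {sbA : ℕ → Module.End ℤ A}
    {sF sbF : ℕ → Module.End ℤ F} (hsbA : IsSigmaBarPlus sbA) (h : MultOver sbA sbF)
    (hsF : ∀ (n : ℕ) (k : ℤ), sF n (bb k) = ι ℤ (b (k + n)) • bb (k - 1))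
    (hsbF : ∀ (n : ℕ) (k : ℤ), sbF n (bb k) = ((-1 : ℤ) ^ n) • bbp k n fun _ => 1)
    (n : ℕ) (k : ℤ) : seriesMul sbF sF n (bb k) = if n = 0 then bb k else 0 := by
  obtain ⟨-, hd0, hd1, hd2⟩ := hsbA
  set H : ℕ → F := fun j => ι ℤ (b (k + (n - j : ℕ))) • sbF j (bb (k - 1))
  have telescope : seriesMul sbF sF n (bb k) = H n := by
    rw [seriesMul_apply, sum_range_succ', ← sub_add_cancel (H n) (H 0), ← sum_range_sub]
    congr 1
    · refine sum_congr rfl fun j hj => ?_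
      rw [hsF, h.apply_succ_ι_smul hd0 (hd1 _) (fun i hi => hd2 i hi _)]
      have hjn := mem_range.1 hj
      congr 4
      omega
    · rw [hsF, h.apply_zero_smul hd0]
  rw [telescope]
  rcases n with _ | r
  · simp [H, hsbF, bbp, wb, ι_b_smul_bb_sub_one]
  · simp [H, hsbF, smul_comm (ι ℤ (b k)), ι_b_smul_bbp_sub_one_succ]

theorem seriesMul_sigmaBarMinus_sigmaMinus_bb {smF sbmF : ℕ → Module.End ℤ F}
    (hsmF : ∀ (n : ℕ) (k : ℤ), smF n (bb k) = if n = 0 then bb k else 0)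
    (hsbmF : ∀ (n : ℕ) (k : ℤ), sbmF n (bb k) = if n = 0 then bb k else 0)
    (n : ℕ) (k : ℤ) : seriesMul sbmF smF n (bb k) = if n = 0 then bb k else 0 := by
  rw [seriesMul_apply, sum_range_succ, sum_eq_zero fun j hj => by
    rw [hsmF, if_neg (by have := mem_range.1 hj; omega), map_zero]]
  simp [hsmF, hsbmF]

/-- On each charge-`m` Fock space, `σ̄₊(z)σ₊(z) = id` and `σ̄₋(z)σ₋(z) = id`
(Cauchy-productwise in `End(F_m)[[z^{±1}]]`). -/
theorem stmt12
    (sA sbA smA sbmA : ℕ → Module.End ℤ A)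
    (hsA : IsSigmaPlus sA) (hsbA : IsSigmaBarPlus sbA)
    (hsmA : IsSigmaMinus smA) (hsbmA : IsSigmaBarMinus sbmA)
    (sF sbF smF sbmF : ℕ → Module.End ℤ F)
    (h₁ : MultOver sA sF) (h₂ : MultOver sbA sbF)
    (h₃ : MultOver smA smF) (h₄ : MultOver sbmA sbmF)
    (hsF : ∀ (n : ℕ) (k : ℤ), sF n (bb k) = ι ℤ (b (k + n)) • bb (k - 1))
    (hsbF : ∀ (n : ℕ) (k : ℤ), sbF n (bb k) = ((-1 : ℤ) ^ n) • bbp k n fun _ => 1)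
    (hsmF : ∀ (n : ℕ) (k : ℤ), smF n (bb k) = if n = 0 then bb k else 0)
    (hsbmF : ∀ (n : ℕ) (k : ℤ), sbmF n (bb k) = if n = 0 then bb k else 0) :
    ∀ (m : ℤ) (f : F), f ∈ Fm m → ∀ n : ℕ,
      (∑ j ∈ Finset.range (n + 1), sbF j (sF (n - j) f)) = (if n = 0 then f else 0) ∧
      (∑ j ∈ Finset.range (n + 1), sbmF j (smF (n - j) f)) = (if n = 0 then f else 0) := by
  have plusA := hsA.1.seriesMul_apply_eq_ite hsbA.1 hsA.2.1 hsbA.2.1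
    (seriesMul_sigmaBarPlus_sigmaPlus_ι hsA hsbA)
  have minusA := hsmA.1.seriesMul_apply_eq_ite hsbmA.1 hsmA.2.1 hsbmA.2.1
    (seriesMul_sigmaBarMinus_sigmaMinus_ι hsmA hsbmA)
  intro m f _ n
  rw [← seriesMul_apply, ← seriesMul_apply]
  exact ⟨eq_ite_of_map_smul (IsMultiplicativeOver.map_smul_of_eq_ite (h₁.mul h₂) plusA)
      (seriesMul_sigmaBarPlus_sigmaPlus_bb hsbA h₂ hsF hsbF) n f,
    eq_ite_of_map_smul (IsMultiplicativeOver.map_smul_of_eq_ite (h₃.mul h₄) minusA)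
      (seriesMul_sigmaBarMinus_sigmaMinus_bb hsmF hsbmF) n f⟩
end
end

section
/- For any index sequence (i_1,…,i_r) of nonnegative integers and any m ∈ ℤ: σ_{i_1}⋯σ_{i_r}[b]_m = (σ_{i_1}⋯σ_{i_r}(b_m∧b_{m−1}∧⋯∧b_{m−r+1})) ∧ [b]_{m−r} in the fermionic Fock space. -/
open ExteriorAlgebra

noncomputable section

section Aux

variable (sA : ℕ → Module.End ℤ A) (hsA : IsSigmaPlus sA)

/-- the consecutive chain `b_m ∧ ⋯ ∧ b_{m-s+1}` splits off its bottom factor. -/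
lemma chain_succ (m : ℤ) (s : ℕ) :
    wb m (s + 1) (fun _ => 0) = wb m s (fun _ => 0) * ι ℤ (b (m - s)) := by
  unfold wb
  rw [List.ofFn_succ']
  simp [List.concat_eq_append]

include hsA in
lemma expand_step (n : ℕ) (u : A) (q : ℤ) :
    sA (n + 1) (u * ι ℤ (b q)) =
      sA (n + 1) u * ι ℤ (b q) + sA n (u * ι ℤ (b (q + 1))) := by
  rw [hsA.1, hsA.1, Finset.sum_range_succ]
  have h0 : sA (n + 1 - (n + 1)) (ι ℤ (b q)) = ι ℤ (b q) := by
    simp [hsA.2.2]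
  rw [h0, add_comm]
  congr 1
  apply Finset.sum_congr rfl
  intro j hj
  rw [Finset.mem_range] at hj
  congr 1
  rw [hsA.2.2, hsA.2.2]
  congr 2
  omega

include hsA in
lemma master : ∀ (ops : List ℕ) (m : ℤ) (s : ℕ), ops.length ≤ s →
    (ops.map sA).prod (wb m s (fun _ => 0) * ι ℤ (b (m - s))) =
      (ops.map sA).prod (wb m s (fun _ => 0)) * ι ℤ (b (m - s)) := by
  intro ops
  induction ops with
  | nil => intro m s _; simp
  | cons n ops ih =>
    intro m s hs
    obtain ⟨s', rfl⟩ : ∃ s', s = s' + 1 := ⟨s - 1, by simp at hs; omega⟩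
    have hlen : ops.length ≤ s' + 1 := by simp at hs; omega
    have hlen' : ops.length ≤ s' := by simp at hs; omega
    rw [List.map_cons, List.prod_cons, Module.End.mul_apply, Module.End.mul_apply,
      ih m (s' + 1) hlen]
    cases n with
    | zero => rw [hsA.2.1]; rfl
    | succ n =>
      rw [expand_step sA hsA]
      have key : (ops.map sA).prod (wb m (s' + 1) (fun _ => 0)) * ι ℤ (b (m - (s' + 1 : ℕ) + 1)) = 0 := by
        have h1 : wb m (s' + 1) (fun _ => 0) = wb m s' (fun _ => 0) * ι ℤ (b (m - s')) :=
          chain_succ m s'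
        rw [h1, ih m s' hlen']
        have : (m - (s' + 1 : ℕ) + 1 : ℤ) = m - s' := by push_cast; ring
        rw [this, mul_assoc, ExteriorAlgebra.ι_sq_zero, mul_zero]
      rw [key, map_zero, add_zero]

end Aux

/-- `σ_{i₁}⋯σ_{i_r}[b]_m = (σ_{i₁}⋯σ_{i_r} b^r_m) ∧ [b]_{m−r}`, where
`b^r_m = b_m ∧ b_{m−1} ∧ ⋯ ∧ b_{m−r+1}`. -/
theorem stmt14 (sA : ℕ → Module.End ℤ A) (hsA : IsSigmaPlus sA)
    (sF : ℕ → Module.End ℤ F) (hmult : MultOver sA sF)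
    (hbb : ∀ (n : ℕ) (k : ℤ), sF n (bb k) = ι ℤ (b (k + n)) • bb (k - 1)) :
    ∀ (r : ℕ) (idx : Fin r → ℕ) (m : ℤ),
      (List.ofFn fun k : Fin r => sF (idx k)).prod (bb m) =
        ((List.ofFn fun k : Fin r => sA (idx k)).prod (wb m r fun _ => 0)) • bb (m - r) := by
  intro r
  induction r with
  | zero =>
    intro idx m
    simp [wb, bb]
  | succ r ih =>
    intro idx m
    rw [List.ofFn_succ, List.ofFn_succ, List.prod_cons, List.prod_cons,
      Module.End.mul_apply, Module.End.mul_apply, ih (fun i => idx i.succ) m,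
      hmult (idx 0)]
    have step : ∀ j ∈ Finset.range (idx 0 + 1),
        sA j ((List.ofFn fun k : Fin r => sA (idx k.succ)).prod (wb m r fun _ => 0)) •
          sF (idx 0 - j) (bb (m - r)) =
        (sA j ((List.ofFn fun k : Fin r => sA (idx k.succ)).prod (wb m r fun _ => 0)) *
          sA (idx 0 - j) (ι ℤ (b (m - r)))) • bb (m - r - 1) := by
      intro j _
      rw [hbb, hsA.2.2, smul_smul]
    rw [Finset.sum_congr rfl step, ← Finset.sum_smul, ← hsA.1]
    have hmap : (List.ofFn fun k : Fin r => sA (idx k.succ)) =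
        ((List.ofFn fun k : Fin r => idx k.succ).map sA) := by
      rw [List.map_ofFn]; rfl
    have hm := master sA hsA (List.ofFn fun k : Fin r => idx k.succ) m r (by simp)
    rw [hmap, ← hm, ← chain_succ, ← hmap]
    have : (m - (r : ℤ) - 1) = m - ((r : ℕ) + 1 : ℕ) := by push_cast; ring
    rw [this]
end
end
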